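/- Let g be an oriented two-graph on a finite vertex set V and let C be its associated switching class of tournaments on V. Then g is special if and only if for every tournament T ∈ C there is at most one vertex v ∈ V such that the tournament obtained from the augmentation T⁺ by deleting v is isomorphic to a member of C. -/

import Mathlib

/-!
The `r`-subsets of an `(r+1)`-set are the complements of its points, so `g` is special iff every
oriented two-graph `h` on `r + 1` vertices has at most two vertices whose deletion leaves a copy
of `g`. An oriented two-graph is determined by its values on the triples through any fixed
vertex `w`, so `h = g_T` for the tournament `T` in which `w` is a sink and `x → y` is read off
from `h x y w`. If deleting `w` leaves a copy of `g`, this `T` is the augmentation `T₀⁺` of some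
`T₀ ∈ C`, with `∞ = w`; conversely `g_{T₀⁺}` restricts to `g` on `V` for every `T₀ ∈ C`. So the
vertices of `g_{T₀⁺}` whose deletion leaves a copy of `g` are `∞` together with the `v` for which
`T₀⁺ \ {v}` is isomorphic to a member of `C`.
-/

def IsTournament {V : Type*} (e : V → V → ℤ) : Prop :=
  (∀ x y : V, e y x = - e x y) ∧ ∀ x y : V, x ≠ y → e x y = 1 ∨ e x y = -1

def gT {V : Type*} (e : V → V → ℤ) : V → V → V → ℤ :=
  fun x y z => e x y * e y z * e z x

def IsOrientedTwoGraph {V : Type*} (g : V → V → V → ℤ) : Prop :=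
  (∀ x y z : V, g y x z = - g x y z) ∧
  (∀ x y z : V, g x z y = - g x y z) ∧
  (∀ x y z : V, x ≠ y → y ≠ z → x ≠ z → g x y z = 1 ∨ g x y z = -1) ∧
  (∀ x y z w : V, x ≠ y → x ≠ z → x ≠ w → y ≠ z → y ≠ w → z ≠ w →
    g x y z * g y x w * g z y w * g x z w = 1)

def TwoGraphIso {V₁ V₂ : Type*} (g₁ : V₁ → V₁ → V₁ → ℤ) (g₂ : V₂ → V₂ → V₂ → ℤ) : Prop :=
  ∃ φ : V₁ ≃ V₂, ∀ x y z, g₂ (φ x) (φ y) (φ z) = g₁ x y z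

def restrict3 {W : Type*} (h : W → W → W → ℤ) (A : Finset W) :
    {a // a ∈ A} → {a // a ∈ A} → {a // a ∈ A} → ℤ :=
  fun x y z => h x.1 y.1 z.1

def IsSpecial {V : Type} [Fintype V] (g : V → V → V → ℤ) : Prop :=
  ∀ (W : Type) [Fintype W], ∀ h : W → W → W → ℤ,
    IsOrientedTwoGraph h → Fintype.card W = Fintype.card V + 1 →
    {A : Finset W | A.card = Fintype.card V ∧ TwoGraphIso g (restrict3 h A)}.ncard ≤ 2

/-- Isomorphism of tournaments. -/
def TournIso {V₁ V₂ : Type*} (e₁ : V₁ → V₁ → ℤ) (e₂ : V₂ → V₂ → ℤ) : Prop :=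
  ∃ φ : V₁ ≃ V₂, ∀ x y, e₂ (φ x) (φ y) = e₁ x y

/-- The augmentation `T⁺` of the tournament `T`: a new vertex `∞` (here `none`) is added,
with all edges between `V` and `∞` directed towards `∞`. -/
def aug {V : Type*} (e : V → V → ℤ) : Option V → Option V → ℤ
  | some a, some b => e a b
  | some _, none => 1
  | none, some _ => -1
  | none, none => 0


section Tournaments

variable {V W : Type*}

lemma IsTournament.comp {e : W → W → ℤ} (he : IsTournament e) {f : V → W}
    (hf : f.Injective) : IsTournament (fun x y => e (f x) (f y)) :=
  ⟨fun _ _ => he.1 _ _, fun _ _ hxy => he.2 _ _ (hf.ne hxy)⟩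

lemma IsTournament.aug {e : V → V → ℤ} (he : IsTournament e) : IsTournament (aug e) := by
  refine ⟨?_, ?_⟩
  · rintro (_ | x) (_ | y)
    exacts [rfl, rfl, rfl, he.1 x y]
  · rintro (_ | x) (_ | y) hxy <;> simp_all [_root_.aug, he.2]

lemma IsTournament.mul_self_eq_one {e : V → V → ℤ} (he : IsTournament e) {x y : V}
    (hxy : x ≠ y) : e x y * e x y = 1 := by
  rcases he.2 x y hxy with h | h <;> simp [h]

lemma IsTournament.isOrientedTwoGraph_gT {e : V → V → ℤ} (he : IsTournament e) :
    IsOrientedTwoGraph (gT e) := by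
  have hanti := he.1
  refine ⟨fun x y z => ?_, fun x y z => ?_, fun x y z hxy hyz hxz => ?_,
    fun x y z w hxy hxz hxw hyz hyw hzw => ?_⟩
  · simp only [gT, hanti y x, hanti x z, hanti z y]; ring
  · simp only [gT, hanti x z, hanti z y, hanti y x]; ring
  · rcases he.2 x y hxy with h₁ | h₁ <;> rcases he.2 y z hyz with h₂ | h₂ <;>
      rcases he.2 z x hxz.symm with h₃ | h₃ <;> simp [gT, h₁, h₂, h₃]
  · -- every edge of the `K₄` occurs twice, once in each direction
    have hsq : gT e x y z * gT e y x w * gT e z y w * gT e x z w =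
        (e x y * e x y) * (e y z * e y z) * (e z x * e z x) *
          ((e x w * e x w) * (e y w * e y w) * (e z w * e z w)) := by
      simp only [gT, hanti y x, hanti w y, hanti z y, hanti w z, hanti x z, hanti w x]; ring
    rw [hsq, he.mul_self_eq_one hxy, he.mul_self_eq_one hyz, he.mul_self_eq_one hxz.symm,
      he.mul_self_eq_one hxw, he.mul_self_eq_one hyw, he.mul_self_eq_one hzw]
    norm_num

lemma exists_tournIso_iff_twoGraphIso {A : Type*} {g : V → V → V → ℤ} {s : A → A → ℤ}
    (hs : IsTournament s) :
    (∃ e, IsTournament e ∧ gT e = g ∧ TournIso e s) ↔ TwoGraphIso g (gT s) := by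
  constructor
  · rintro ⟨e, -, rfl, φ, hφ⟩
    exact ⟨φ, fun x y z => by simp only [gT, hφ]⟩
  · rintro ⟨φ, hφ⟩
    exact ⟨fun x y => s (φ x) (φ y), hs.comp φ.injective, funext fun x => funext fun y =>
      funext fun z => hφ x y z, φ, fun _ _ => rfl⟩

end Tournaments

namespace IsOrientedTwoGraph

variable {V : Type*} {g g' : V → V → V → ℤ}

lemma apply_self_left (hg : IsOrientedTwoGraph g) (x z : V) : g x x z = 0 := by
  linarith [hg.1 x x z]

lemma apply_self_right (hg : IsOrientedTwoGraph g) (x y : V) : g x y y = 0 := by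
  linarith [hg.2.1 x y y]

lemma apply_self_left_right (hg : IsOrientedTwoGraph g) (x y : V) : g x y x = 0 := by
  linarith [hg.1 y x x, hg.2.1 y x x]

lemma apply_eq_mul (hg : IsOrientedTwoGraph g) {x y z w : V} (hxy : x ≠ y) (hxz : x ≠ z)
    (hxw : x ≠ w) (hyz : y ≠ z) (hyw : y ≠ w) (hzw : z ≠ w) :
    g x y z = g y x w * g z y w * g x z w := by
  have hcocycle := hg.2.2.2 x y z w hxy hxz hxw hyz hyw hzw
  rcases hg.2.2.1 x y z hxy hyz hxz with h | h <;> rw [h] at hcocycle ⊢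
  · linear_combination -hcocycle
  · linear_combination hcocycle

lemma ext_of_apply_eq (hg : IsOrientedTwoGraph g) (hg' : IsOrientedTwoGraph g') (w : V)
    (hw : ∀ x y, g x y w = g' x y w) : g = g' := by
  funext x y z
  by_cases hxy : x = y
  · rw [hxy, hg.apply_self_left, hg'.apply_self_left]
  by_cases hyz : y = z
  · rw [hyz, hg.apply_self_right, hg'.apply_self_right]
  by_cases hxz : x = z
  · rw [hxz, hg.apply_self_left_right, hg'.apply_self_left_right]
  by_cases hzw : z = w
  · rw [hzw, hw]
  by_cases hxw : x = w
  · rw [hxw, hg.1, hg.2.1, hg'.1, hg'.2.1, hw]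
  by_cases hyw : y = w
  · rw [hyw, hg.2.1, hg'.2.1, hw]
  rw [hg.apply_eq_mul hxy hxz hxw hyz hyw hzw, hg'.apply_eq_mul hxy hxz hxw hyz hyw hzw,
    hw, hw, hw]

end IsOrientedTwoGraph

section SinkTournament

variable {W : Type*} [DecidableEq W] {h : W → W → W → ℤ}

def sinkTournament (h : W → W → W → ℤ) (w : W) : W → W → ℤ :=
  fun x y => if x = w then (if y = w then 0 else -1) else if y = w then 1 else - h x y w

lemma isTournament_sinkTournament (hh : IsOrientedTwoGraph h) (w : W) :
    IsTournament (sinkTournament h w) := by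
  refine ⟨fun x y => ?_, fun x y hxy => ?_⟩
  · by_cases hx : x = w <;> by_cases hy : y = w <;> simp [sinkTournament, hx, hy, hh.1 x y w]
  · by_cases hx : x = w <;> by_cases hy : y = w
    · exact absurd (hx.trans hy.symm) hxy
    · simp [sinkTournament, hx, hy]
    · simp [sinkTournament, hx, hy]
    · rcases hh.2.2.1 x y w hxy hy hx with h | h <;> simp [sinkTournament, hx, hy, h]

lemma gT_sinkTournament (hh : IsOrientedTwoGraph h) (w : W) : gT (sinkTournament h w) = h := by
  refine (isTournament_sinkTournament hh w).isOrientedTwoGraph_gT.ext_of_apply_eq hh w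
    fun x y => ?_
  by_cases hx : x = w
  · simp [gT, sinkTournament, hx, hh.apply_self_left_right]
  by_cases hy : y = w
  · simp [gT, sinkTournament, hy, hh.apply_self_right]
  simp [gT, sinkTournament, hx, hy]

end SinkTournament

section VertexDeletions

variable {V W X : Type*}

lemma TwoGraphIso.trans_equiv {A B : Type*} {g : V → V → V → ℤ} {h₁ : A → A → A → ℤ}
    {h₂ : B → B → B → ℤ} (hiso : TwoGraphIso g h₁) (σ : A ≃ B)
    (hσ : ∀ a b c, h₂ (σ a) (σ b) (σ c) = h₁ a b c) : TwoGraphIso g h₂ := by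
  obtain ⟨φ, hφ⟩ := hiso
  exact ⟨φ.trans σ, fun x y z => (hσ _ _ _).trans (hφ x y z)⟩

lemma twoGraphIso_congr_right {A B : Type*} {g : V → V → V → ℤ} {h₁ : A → A → A → ℤ}
    {h₂ : B → B → B → ℤ} (σ : A ≃ B) (hσ : ∀ a b c, h₂ (σ a) (σ b) (σ c) = h₁ a b c) :
    TwoGraphIso g h₁ ↔ TwoGraphIso g h₂ :=
  ⟨fun hiso => hiso.trans_equiv σ hσ, fun hiso => hiso.trans_equiv σ.symm fun a b c => by
    simpa using (hσ (σ.symm a) (σ.symm b) (σ.symm c)).symm⟩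

def isoVertexDeletions (g : V → V → V → ℤ) (h : W → W → W → ℤ) : Set W :=
  {w | TwoGraphIso g (fun x y z : {u // u ≠ w} => h x y z)}

lemma twoGraphIso_restrict3_erase_iff [Fintype W] [DecidableEq W] {g : V → V → V → ℤ}
    {h : W → W → W → ℤ} {w : W} :
    TwoGraphIso g (restrict3 h (Finset.univ.erase w)) ↔ w ∈ isoVertexDeletions g h :=
  twoGraphIso_congr_right (h₂ := fun x y z : {u // u ≠ w} => h x y z)
    (Equiv.subtypeEquivRight fun _ => by simp) fun _ _ _ => rfl

lemma isoVertexDeletions_comp_equiv (g : V → V → V → ℤ) (h : W → W → W → ℤ) (ψ : X ≃ W) :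
    isoVertexDeletions g (fun a b c => h (ψ a) (ψ b) (ψ c)) = ψ ⁻¹' isoVertexDeletions g h := by
  ext x
  exact twoGraphIso_congr_right (h₂ := fun a b c : {w // w ≠ ψ x} => h a b c)
    (ψ.subtypeEquiv fun _ => ψ.injective.ne_iff.symm) fun _ _ _ => rfl

lemma ncard_setOf_card_eq_and [Fintype W] [DecidableEq W] {n : ℕ}
    (hW : Fintype.card W = n + 1) (P : Finset W → Prop) :
    {A : Finset W | A.card = n ∧ P A}.ncard = {w | P (Finset.univ.erase w)}.ncard := by
  have himage : (Finset.univ.erase ·) '' {w | P (Finset.univ.erase w)} =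
      {A : Finset W | A.card = n ∧ P A} := by
    ext A
    constructor
    · rintro ⟨w, hw, rfl⟩
      exact ⟨by simp [Finset.card_erase_of_mem, hW], hw⟩
    · rintro ⟨hA, hP⟩
      obtain ⟨w, hw⟩ := Finset.card_eq_one.mp (show Aᶜ.card = 1 by
        rw [Finset.card_compl, hA, hW]; omega)
      have hAw : Finset.univ.erase w = A := by rw [← Finset.compl_singleton, ← hw, compl_compl]
      exact ⟨w, show P _ by rwa [hAw], hAw⟩
  rw [← himage, Set.ncard_image_of_injective _
    fun a b hab => (Finset.erase_inj _ (Finset.mem_univ a)).mp hab]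

lemma isSpecial_iff {V : Type} [Fintype V] {g : V → V → V → ℤ} :
    IsSpecial g ↔ ∀ (W : Type) [Fintype W] (h : W → W → W → ℤ), IsOrientedTwoGraph h →
      Fintype.card W = Fintype.card V + 1 → (isoVertexDeletions g h).ncard ≤ 2 := by
  classical
  have hcount : ∀ (W : Type) [Fintype W] (h : W → W → W → ℤ),
      Fintype.card W = Fintype.card V + 1 →
      {A : Finset W | A.card = Fintype.card V ∧ TwoGraphIso g (restrict3 h A)}.ncard =
        (isoVertexDeletions g h).ncard := by
    intro W _ h hW
    simp_rw [ncard_setOf_card_eq_and hW, twoGraphIso_restrict3_erase_iff]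
    rfl
  exact ⟨fun hg W _ h hh hW => hcount W h hW ▸ hg W h hh hW,
    fun hg W _ h hh hW => (hcount W h hW).symm ▸ hg W h hh hW⟩

end VertexDeletions

section Augmentation

variable {V W : Type*}

lemma ncard_eq_ncard_preimage_some_add_one [Finite V] {S : Set (Option V)} (hS : none ∈ S) :
    S.ncard = (some ⁻¹' S).ncard + 1 := by
  have hsplit : S = insert none (some '' (some ⁻¹' S)) := by
    ext (_ | v) <;> simp [hS]
  conv_lhs => rw [hsplit]
  rw [Set.ncard_insert_of_notMem (by simp),
    Set.ncard_image_of_injective _ (Option.some_injective V)]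

lemma none_mem_isoVertexDeletions_gT_aug (e : V → V → ℤ) :
    none ∈ isoVertexDeletions (gT e) (gT (aug e)) :=
  ⟨⟨fun x => ⟨some x, Option.some_ne_none x⟩,
    fun u => u.1.get (Option.ne_none_iff_isSome.mp u.2), fun _ => rfl,
    fun u => by ext; simp⟩, fun _ _ _ => rfl⟩

lemma setOf_exists_tournIso_aug_eq {g : V → V → V → ℤ} {e : V → V → ℤ} (he : IsTournament e) :
    {v : V | ∃ e' : V → V → ℤ, IsTournament e' ∧ gT e' = g ∧
        TournIso e' (fun (x y : {u : Option V // u ≠ some v}) => aug e x.1 y.1)} =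
      some ⁻¹' isoVertexDeletions g (gT (aug e)) := by
  ext v
  exact exists_tournIso_iff_twoGraphIso (he.aug.comp Subtype.val_injective)

lemma ncard_isoVertexDeletions_gT_aug [Finite V] {e : V → V → ℤ} (he : IsTournament e) :
    (isoVertexDeletions (gT e) (gT (aug e))).ncard =
      {v : V | ∃ e' : V → V → ℤ, IsTournament e' ∧ gT e' = gT e ∧
        TournIso e' (fun (x y : {u : Option V // u ≠ some v}) => aug e x.1 y.1)}.ncard + 1 := by
  rw [setOf_exists_tournIso_aug_eq he]
  exact ncard_eq_ncard_preimage_some_add_one (none_mem_isoVertexDeletions_gT_aug e)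

lemma exists_gT_aug_equiv [DecidableEq W] {g : V → V → V → ℤ} {h : W → W → W → ℤ}
    (hh : IsOrientedTwoGraph h) {w : W} (hw : w ∈ isoVertexDeletions g h) :
    ∃ e, IsTournament e ∧ gT e = g ∧
      ∃ ψ : Option V ≃ W, gT (aug e) = fun a b c => h (ψ a) (ψ b) (ψ c) := by
  obtain ⟨φ, hφ⟩ := hw
  let t := sinkTournament h w
  have hth : gT t = h := gT_sinkTournament hh w
  let ψ : Option V ≃ W := (Equiv.optionCongr φ).trans (Equiv.optionSubtypeNe w)
  have hψ : ∀ a b, aug (fun x y => t (φ x) (φ y)) a b = t (ψ a) (ψ b) := by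
    rintro (_ | x) (_ | y) <;> simp [aug, ψ, t, sinkTournament, (φ _).2]
  refine ⟨fun x y => t (φ x) (φ y),
    (isTournament_sinkTournament hh w).comp (Subtype.val_injective.comp φ.injective), ?_, ψ, ?_⟩
  · funext x y z
    rw [← hφ x y z, ← hth]
    rfl
  · funext a b c
    simp only [gT, hψ]
    rw [← hth]
    rfl

end Augmentation

theorem statement15_general {V : Type} [Fintype V] (g : V → V → V → ℤ) :
    IsSpecial g ↔
      ∀ e : V → V → ℤ, IsTournament e → gT e = g →
        {v : V | ∃ e' : V → V → ℤ, IsTournament e' ∧ gT e' = g ∧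
          TournIso e'
            (fun (x y : {u : Option V // u ≠ some v}) => aug e x.1 y.1)}.Subsingleton := by
  rw [isSpecial_iff]
  constructor
  · rintro hspec e he rfl
    rw [← Set.ncard_le_one_iff_subsingleton, ← Nat.add_le_add_iff_right (n := 1),
      ← ncard_isoVertexDeletions_gT_aug he]
    exact hspec _ _ he.aug.isOrientedTwoGraph_gT Fintype.card_option
  · intro hC W _ h hh _
    classical
    obtain hempty | ⟨w, hw⟩ := (isoVertexDeletions g h).eq_empty_or_nonempty
    · simp [hempty]
    obtain ⟨e, he, rfl, ψ, hψ⟩ := exists_gT_aug_equiv hh hw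
    have hsub := Set.ncard_le_one_iff_subsingleton.mpr (hC e he rfl)
    rw [← Set.ncard_preimage_of_injective_subset_range ψ.injective (by simp),
      ← isoVertexDeletions_comp_equiv, ← hψ, ncard_isoVertexDeletions_gT_aug he]
    omega

/-- an oriented two-graph `g` on a finite vertex set `V`, with associated
switching class `C = {tournaments e on V with g_e = g}`, is special iff for every
tournament `e ∈ C` there is at most one vertex `v ∈ V` such that the tournament obtained
from the augmentation `e⁺` by deleting `v` is isomorphic to a member of `C`. -/
theorem statement15 {V : Type} [Fintype V] (g : V → V → V → ℤ)
    (hg : IsOrientedTwoGraph g) :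
    IsSpecial g ↔
      ∀ e : V → V → ℤ, IsTournament e → gT e = g →
        {v : V | ∃ e' : V → V → ℤ, IsTournament e' ∧ gT e' = g ∧
          TournIso e'
            (fun (x y : {u : Option V // u ≠ some v}) => aug e x.1 y.1)}.Subsingleton :=
  statement15_general g
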